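/- Let l ∈ ℕ, C > 0, t, λ ∈ ℕ with 2^l + 2l − 1 ≤ λ. Suppose η and η̄ both satisfy discretized hierarchical max-pooling models of level l and order t with the same grid points, built from functions g_{k,s}^{(i)} : ℝ⁴ → [0,1] (for k ≥ 1) and g_{0,s}^{(i)} : [0,1] → [0,1], respectively ḡ_{k,s}^{(i)} : ℝ⁴ → ℝ₊ with ‖ḡ_{k,s}^{(i)}‖_{[0,2]⁴,∞} ≤ 2 and ḡ_{0,s}^{(i)} : [0,1] → [0,2]. If each restriction g_{k,s}^{(i)}|_{[0,2]⁴} is Lipschitz with constant C in the maximum metric, then for all x ∈ [0,1]^{G_λ}: |η(x) − η̄(x)| ≤ (C+1)^l · max over all i,j,k,s of { ‖g_{0,j}^{(i)} − ḡ_{0,j}^{(i)}‖_{[0,1],∞}, ‖g_{k,s}^{(i)} − ḡ_{k,s}^{(i)}‖_{[0,2]⁴,∞} }. -/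

import Mathlib

open scoped Classical

/-- The grid `G_λ = {((i−1/2)/λ − 1/2, (j−1/2)/λ − 1/2) : i,j ∈ {1,…,λ}} ⊂ ℝ²`. -/
noncomputable def gridF (lam : ℕ) : Finset (ℝ × ℝ) :=
  ((Finset.Icc 1 lam) ×ˢ (Finset.Icc 1 lam)).image
    (fun p => (((p.1 : ℝ) - 1 / 2) / lam - 1 / 2, ((p.2 : ℝ) - 1 / 2) / lam - 1 / 2))

/-- The index set `I^{(l)} = {−(2^{l−1}+l−1)/λ, …, (2^{l−1}+l−1)/λ}²` (steps `1/λ`). -/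
noncomputable def idxF (lam l : ℕ) : Finset (ℝ × ℝ) :=
  ((Finset.Icc (-((2 ^ (l - 1) + l - 1 : ℕ) : ℤ)) ((2 ^ (l - 1) + l - 1 : ℕ) : ℤ)) ×ˢ
      (Finset.Icc (-((2 ^ (l - 1) + l - 1 : ℕ) : ℤ)) ((2 ^ (l - 1) + l - 1 : ℕ) : ℤ))).image
    (fun p => ((p.1 : ℝ) / lam, (p.2 : ℝ) / lam))

/-- The set of valid centers: `u ∈ G_λ` with `u + I^{(l)} ⊆ G_λ`. -/
noncomputable def validF (lam l : ℕ) : Finset (ℝ × ℝ) :=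
  (gridF lam).filter (fun u => ∀ v ∈ idxF lam l, u + v ∈ gridF lam)

/-- The recursively defined functions of a discretized hierarchical model:
`fbar g0 g ip x k s u` is `f̄_{k,s}` applied to the image `x` restricted to
`u + I^{(k)}`, where `g0 s = ḡ_{0,s}`, `g k s = ḡ_{k,s}` and `ip k s'` is the
grid point `i_{k,s'}` shifting the subpart of child `(k,s')`. -/
noncomputable def fbar (g0 : ℕ → ℝ → ℝ) (g : ℕ → ℕ → (Fin 4 → ℝ) → ℝ)
    (ip : ℕ → ℕ → ℝ × ℝ) (x : ℝ × ℝ → ℝ) : ℕ → ℕ → (ℝ × ℝ) → ℝ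
  | 0, s => fun u => g0 s (x u)
  | (k + 1), s => fun u =>
      g (k + 1) s (fun j =>
        fbar g0 g ip x k (4 * (s - 1) + (j : ℕ) + 1)
          (u + ip k (4 * (s - 1) + (j : ℕ) + 1)))

/-!
The two models are compared level by level. By induction, every value of either model on a
window inside `G_λ` lies in `[0, 2]`, so the Lipschitz bound and the `ε`-closeness of the
`g`'s apply at each node: an error `e_k` at level `k` becomes at most `C e_k + ε ≤ (C + 1)^{k+1} ε`
at level `k + 1`. Finally a maximum over a common index set is `1`-Lipschitz in the sup norm.
-/

open Set

theorem Finset.abs_sup'_sub_sup'_le {ι α : Type*} [AddCommGroup α] [LinearOrder α]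
    [IsOrderedAddMonoid α] {s : Finset ι} (hs : s.Nonempty) {f g : ι → α} {δ : α}
    (h : ∀ i ∈ s, |f i - g i| ≤ δ) : |s.sup' hs f - s.sup' hs g| ≤ δ := by
  have sub_le : ∀ {f g : ι → α}, (∀ i ∈ s, |f i - g i| ≤ δ) → s.sup' hs f - s.sup' hs g ≤ δ :=
    fun h => sub_le_iff_le_add.2 <| Finset.sup'_le _ _ fun i hi =>
      (sub_le_iff_le_add.1 (le_abs_self _ |>.trans (h i hi))).trans
        (add_le_add_right (Finset.le_sup' _ hi) δ)
  exact abs_sub_le_iff.2 ⟨sub_le h, sub_le fun i hi => abs_sub_comm (g i) (f i) ▸ h i hi⟩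

def IsWindow (lam r : ℕ) (u : ℝ × ℝ) : Prop :=
  ∀ a b : ℤ, a.natAbs ≤ r → b.natAbs ≤ r → u + ((a : ℝ) / lam, (b : ℝ) / lam) ∈ gridF lam

/-- Half-width of `I^{(k)}` in grid steps: truncated subtraction makes this `0` at `k = 0`,
matching the paper's `⌈2^{k-1}⌉ + k - 1`. -/
def windowRadius (k : ℕ) : ℕ := 2 ^ (k - 1) + k - 1

def shiftRadius (k : ℕ) : ℕ := if k = 0 then 1 else 2 ^ (k - 1) + 1

lemma shiftRadius_add_windowRadius (k : ℕ) :
    shiftRadius k + windowRadius k = windowRadius (k + 1) := by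
  rcases k with _ | k
  · rfl
  · simp only [shiftRadius, windowRadius, Nat.add_sub_cancel, pow_succ, if_neg k.succ_ne_zero]
    omega

namespace IsWindow

variable {lam r : ℕ} {u : ℝ × ℝ}

lemma mem_gridF (hu : IsWindow lam r u) : u ∈ gridF lam := by
  simpa [Prod.mk_zero_zero] using hu 0 0 (by simp) (by simp)

lemma shift {s : ℕ} {a b : ℤ} (hu : IsWindow lam (s + r) u) (ha : a.natAbs ≤ s)
    (hb : b.natAbs ≤ s) : IsWindow lam r (u + ((a : ℝ) / lam, (b : ℝ) / lam)) := by
  intro a' b' ha' hb'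
  convert hu (a + a') (b + b') (by omega) (by omega) using 1
  ext <;> simp only [Prod.fst_add, Prod.snd_add, Int.cast_add, add_div] <;> ring

end IsWindow

lemma isWindow_of_mem_validF {lam l : ℕ} {u : ℝ × ℝ} (hu : u ∈ validF lam l) :
    IsWindow lam (windowRadius l) u := by
  intro a b ha hb
  refine (Finset.mem_filter.1 hu).2 _ (Finset.mem_image.2 ⟨(a, b), ?_, rfl⟩)
  simp only [Finset.mem_product, Finset.mem_Icc]
  unfold windowRadius at ha hb
  omega

def GridShiftsBounded (lam : ℕ) (ip : ℕ → ℕ → ℝ × ℝ) : Prop :=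
  ∀ k s, ∃ a b : ℤ, a.natAbs ≤ shiftRadius k ∧ b.natAbs ≤ shiftRadius k ∧
    ip k s = ((a : ℝ) / lam, (b : ℝ) / lam)

section Model

variable {lam : ℕ} {x : ℝ × ℝ → ℝ} {ip : ℕ → ℕ → ℝ × ℝ}

lemma IsWindow.child (hip : GridShiftsBounded lam ip) {k : ℕ} {u : ℝ × ℝ}
    (hu : IsWindow lam (windowRadius (k + 1)) u) (s : ℕ) :
    IsWindow lam (windowRadius k) (u + ip k s) := by
  obtain ⟨a, b, ha, hb, hab⟩ := hip k s
  rw [hab]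
  exact IsWindow.shift (shiftRadius_add_windowRadius k ▸ hu) ha hb

lemma fbar_mem {S T : Set ℝ} {g0 : ℕ → ℝ → ℝ} {g : ℕ → ℕ → (Fin 4 → ℝ) → ℝ}
    (hip : GridShiftsBounded lam ip) (hx : ∀ u ∈ gridF lam, x u ∈ T)
    (hg0 : ∀ s y, y ∈ T → g0 s y ∈ S) (hg : ∀ k s v, (∀ j, v j ∈ S) → g k s v ∈ S)
    {k s : ℕ} {u : ℝ × ℝ} (hu : IsWindow lam (windowRadius k) u) :
    fbar g0 g ip x k s u ∈ S := by
  induction k generalizing s u with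
  | zero => exact hg0 s _ (hx u hu.mem_gridF)
  | succ k ih => exact hg (k + 1) s _ fun j => ih (hu.child hip _)

theorem abs_fbar_sub_fbar_le {C ε : ℝ} (hC : 0 ≤ C) {g0 gb0 : ℕ → ℝ → ℝ}
    {g gb : ℕ → ℕ → (Fin 4 → ℝ) → ℝ} (hip : GridShiftsBounded lam ip)
    (hx : ∀ u ∈ gridF lam, x u ∈ Icc 0 1)
    (hg0 : ∀ s y, y ∈ Icc (0 : ℝ) 1 → g0 s y ∈ Icc 0 2)
    (hg : ∀ k s v, (∀ j, v j ∈ Icc (0 : ℝ) 2) → g k s v ∈ Icc 0 2)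
    (hgb0 : ∀ s y, y ∈ Icc (0 : ℝ) 1 → gb0 s y ∈ Icc 0 2)
    (hgb : ∀ k s v, (∀ j, v j ∈ Icc (0 : ℝ) 2) → gb k s v ∈ Icc 0 2)
    (hLip : ∀ k s v w, (∀ j, v j ∈ Icc (0 : ℝ) 2) → (∀ j, w j ∈ Icc (0 : ℝ) 2) →
      |g k s v - g k s w| ≤ C * Finset.univ.sup' Finset.univ_nonempty (fun j => |v j - w j|))
    (hε0 : ∀ s y, y ∈ Icc (0 : ℝ) 1 → |g0 s y - gb0 s y| ≤ ε)
    (hεk : ∀ k s v, (∀ j, v j ∈ Icc (0 : ℝ) 2) → |g k s v - gb k s v| ≤ ε)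
    {k s : ℕ} {u : ℝ × ℝ} (hu : IsWindow lam (windowRadius k) u) :
    |fbar g0 g ip x k s u - fbar gb0 gb ip x k s u| ≤ (C + 1) ^ k * ε := by
  induction k generalizing s u with
  | zero => simpa [fbar] using hε0 s _ (hx u hu.mem_gridF)
  | succ k ih =>
    have hε : 0 ≤ ε := (abs_nonneg _).trans (hε0 0 0 ⟨le_rfl, zero_le_one⟩)
    set v : Fin 4 → ℝ := fun j =>
      fbar g0 g ip x k (4 * (s - 1) + j + 1) (u + ip k (4 * (s - 1) + j + 1))
    set w : Fin 4 → ℝ := fun j =>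
      fbar gb0 gb ip x k (4 * (s - 1) + j + 1) (u + ip k (4 * (s - 1) + j + 1))
    have hv : ∀ j, v j ∈ Icc (0 : ℝ) 2 := fun j => fbar_mem hip hx hg0 hg (hu.child hip _)
    have hw : ∀ j, w j ∈ Icc (0 : ℝ) 2 := fun j => fbar_mem hip hx hgb0 hgb (hu.child hip _)
    have hvw : Finset.univ.sup' Finset.univ_nonempty (fun j => |v j - w j|) ≤ (C + 1) ^ k * ε :=
      Finset.sup'_le _ _ fun j _ => ih (hu.child hip _)
    calc |fbar g0 g ip x (k + 1) s u - fbar gb0 gb ip x (k + 1) s u|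
        = |(g (k + 1) s v - g (k + 1) s w) + (g (k + 1) s w - gb (k + 1) s w)| := by
          rw [fbar, fbar, sub_add_sub_cancel]
      _ ≤ C * ((C + 1) ^ k * ε) + ε :=
          (abs_add_le _ _).trans (add_le_add
            ((hLip _ _ _ _ hv hw).trans (mul_le_mul_of_nonneg_left hvw hC)) (hεk _ _ _ hw))
      _ ≤ (C + 1) ^ (k + 1) * ε := by
          have : ε ≤ (C + 1) ^ k * ε := le_mul_of_one_le_left hε (one_le_pow₀ (by linarith))
          rw [pow_succ]
          linarith

end Model

theorem discretized_model_approx_general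
    (l lam t : ℕ) (C : ℝ) (hC : 0 < C)
    (g0 gb0 : ℕ → ℕ → ℝ → ℝ)                -- (i, s) ↦ g_{0,s}^{(i)}, ḡ_{0,s}^{(i)}
    (g gb : ℕ → ℕ → ℕ → (Fin 4 → ℝ) → ℝ)    -- (i, k, s) ↦ g_{k,s}^{(i)}, ḡ_{k,s}^{(i)}
    (ip : ℕ → ℕ → ℕ → ℝ × ℝ)                -- common grid points i_{k,s}^{(i)}
    (hip : ∀ i k s, ∃ a b : ℤ,
      a.natAbs ≤ (if k = 0 then 1 else 2 ^ (k - 1) + 1) ∧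
      b.natAbs ≤ (if k = 0 then 1 else 2 ^ (k - 1) + 1) ∧
      ip i k s = ((a : ℝ) / lam, (b : ℝ) / lam))
    (hg0 : ∀ i s x, x ∈ Set.Icc (0 : ℝ) 1 → g0 i s x ∈ Set.Icc (0 : ℝ) 1)
    (hg : ∀ i k s v, g i k s v ∈ Set.Icc (0 : ℝ) 1)
    (hgb0 : ∀ i s x, x ∈ Set.Icc (0 : ℝ) 1 → gb0 i s x ∈ Set.Icc (0 : ℝ) 2)
    (hgbpos : ∀ i k s v, 0 ≤ gb i k s v)
    (hgb2 : ∀ i k s v, (∀ j, v j ∈ Set.Icc (0 : ℝ) 2) → gb i k s v ≤ 2)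
    (hLip : ∀ i k s v w, (∀ j, v j ∈ Set.Icc (0 : ℝ) 2) → (∀ j, w j ∈ Set.Icc (0 : ℝ) 2) →
      |g i k s v - g i k s w|
        ≤ C * Finset.univ.sup' Finset.univ_nonempty (fun j : Fin 4 => |v j - w j|))
    (ε : ℝ)
    (hε0 : ∀ i s x, x ∈ Set.Icc (0 : ℝ) 1 → |g0 i s x - gb0 i s x| ≤ ε)
    (hεk : ∀ i k s v, (∀ j, v j ∈ Set.Icc (0 : ℝ) 2) → |g i k s v - gb i k s v| ≤ ε)
    (x : ℝ × ℝ → ℝ) (hx : ∀ u ∈ gridF lam, x u ∈ Set.Icc (0 : ℝ) 1)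
    (hne : ((validF lam l) ×ˢ (Finset.Icc 1 t)).Nonempty) :
    |((validF lam l) ×ˢ (Finset.Icc 1 t)).sup' hne
        (fun p => fbar (g0 p.2) (g p.2) (ip p.2) x l 1 p.1)
      - ((validF lam l) ×ˢ (Finset.Icc 1 t)).sup' hne
        (fun p => fbar (gb0 p.2) (gb p.2) (ip p.2) x l 1 p.1)|
      ≤ (C + 1) ^ l * ε := by
  refine Finset.abs_sup'_sub_sup'_le hne fun p hp => ?_
  have hle : Icc (0 : ℝ) 1 ⊆ Icc 0 2 := Icc_subset_Icc le_rfl one_le_two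
  exact abs_fbar_sub_fbar_le hC.le (hip p.2) hx (fun s y hy => hle (hg0 p.2 s y hy))
    (fun k s v _ => hle (hg p.2 k s v)) (hgb0 p.2)
    (fun k s v hv => ⟨hgbpos p.2 k s v, hgb2 p.2 k s v hv⟩) (hLip p.2) (hε0 p.2) (hεk p.2)
    (isWindow_of_mem_validF (Finset.mem_product.1 hp).1)

/-- Lemma 3: if `η` and `η̄` satisfy discretized hierarchical max-pooling models
of level `l` and order `t` with the same grid points, built from `[0,1]`-valued
functions `g_{k,s}^{(i)}` whose restrictions to `[0,2]⁴` are `C`-Lipschitz in the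
maximum metric, respectively nonnegative functions `ḡ_{k,s}^{(i)}` bounded by `2`
on `[0,2]⁴` (and `ḡ_{0,s}^{(i)} : [0,1] → [0,2]`), then for every image
`x ∈ [0,1]^{G_λ}` and every `ε` dominating all the sup-norm distances
`‖g_{0,j}^{(i)} − ḡ_{0,j}^{(i)}‖_{[0,1],∞}` and `‖g_{k,s}^{(i)} − ḡ_{k,s}^{(i)}‖_{[0,2]⁴,∞}`
one has `|η(x) − η̄(x)| ≤ (C+1)^l · ε`. -/
theorem discretized_model_approx
    (l lam t : ℕ) (hl : 1 ≤ l) (ht : 1 ≤ t) (C : ℝ) (hC : 0 < C)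
    (hlam : 2 ^ l + 2 * l - 1 ≤ lam)
    (g0 gb0 : ℕ → ℕ → ℝ → ℝ)                -- (i, s) ↦ g_{0,s}^{(i)}, ḡ_{0,s}^{(i)}
    (g gb : ℕ → ℕ → ℕ → (Fin 4 → ℝ) → ℝ)    -- (i, k, s) ↦ g_{k,s}^{(i)}, ḡ_{k,s}^{(i)}
    (ip : ℕ → ℕ → ℕ → ℝ × ℝ)                -- common grid points i_{k,s}^{(i)}
    (hip : ∀ i k s, ∃ a b : ℤ,
      a.natAbs ≤ (if k = 0 then 1 else 2 ^ (k - 1) + 1) ∧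
      b.natAbs ≤ (if k = 0 then 1 else 2 ^ (k - 1) + 1) ∧
      ip i k s = ((a : ℝ) / lam, (b : ℝ) / lam))
    (hg0 : ∀ i s x, x ∈ Set.Icc (0 : ℝ) 1 → g0 i s x ∈ Set.Icc (0 : ℝ) 1)
    (hg : ∀ i k s v, g i k s v ∈ Set.Icc (0 : ℝ) 1)
    (hgb0 : ∀ i s x, x ∈ Set.Icc (0 : ℝ) 1 → gb0 i s x ∈ Set.Icc (0 : ℝ) 2)
    (hgbpos : ∀ i k s v, 0 ≤ gb i k s v)
    (hgb2 : ∀ i k s v, (∀ j, v j ∈ Set.Icc (0 : ℝ) 2) → gb i k s v ≤ 2)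
    (hLip : ∀ i k s v w, (∀ j, v j ∈ Set.Icc (0 : ℝ) 2) → (∀ j, w j ∈ Set.Icc (0 : ℝ) 2) →
      |g i k s v - g i k s w|
        ≤ C * Finset.univ.sup' Finset.univ_nonempty (fun j : Fin 4 => |v j - w j|))
    (ε : ℝ)
    (hε0 : ∀ i s x, x ∈ Set.Icc (0 : ℝ) 1 → |g0 i s x - gb0 i s x| ≤ ε)
    (hεk : ∀ i k s v, (∀ j, v j ∈ Set.Icc (0 : ℝ) 2) → |g i k s v - gb i k s v| ≤ ε)
    (x : ℝ × ℝ → ℝ) (hx : ∀ u ∈ gridF lam, x u ∈ Set.Icc (0 : ℝ) 1)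
    (hne : ((validF lam l) ×ˢ (Finset.Icc 1 t)).Nonempty) :
    |((validF lam l) ×ˢ (Finset.Icc 1 t)).sup' hne
        (fun p => fbar (g0 p.2) (g p.2) (ip p.2) x l 1 p.1)
      - ((validF lam l) ×ˢ (Finset.Icc 1 t)).sup' hne
        (fun p => fbar (gb0 p.2) (gb p.2) (ip p.2) x l 1 p.1)|
      ≤ (C + 1) ^ l * ε :=
  discretized_model_approx_general l lam t C hC g0 gb0 g gb ip hip hg0 hg hgb0 hgbpos hgb2 hLip ε
    hε0 hεk x hx hne
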